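/- Valuation lemma: let G be a finite abstract simplicial complex and let X be a real-valued function on the set of subcomplexes of G (subsets of G closed under taking nonempty subsets) satisfying X(∅) = 0 and the valuation property X(A ∪ B) + X(A ∩ B) = X(A) + X(B) for all subcomplexes A, B of G. If X(A) = 1 for every complete subcomplex of G (a subcomplex of the form { y : ∅ ≠ y ⊆ x } for some x ∈ G), then X(A) = χ(A) for every subcomplex A of G. -/
import Mathlib


open Finset BigOperators

variable {α : Type*} [DecidableEq α]

/-- A finite abstract simplicial complex: a finite collection of nonempty finite
sets closed under taking nonempty subsets. -/
def IsComplex (G : Finset (Finset α)) : Prop :=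
  (∀ x ∈ G, x.Nonempty) ∧ ∀ x ∈ G, ∀ y : Finset α, y.Nonempty → y ⊆ x → y ∈ G

/-- A subcomplex of G: a subset of G closed under taking nonempty subsets. -/
def IsSubcomplex (G A : Finset (Finset α)) : Prop :=
  A ⊆ G ∧ ∀ x ∈ A, ∀ y : Finset α, y.Nonempty → y ⊆ x → y ∈ A

/-- ω(x) = (-1)^(|x|-1). -/
def omegaS (x : Finset α) : ℤ := (-1) ^ (x.card - 1)

/-- Euler characteristic χ(A) = ∑_{x∈A} ω(x). -/
def chi (A : Finset (Finset α)) : ℤ := ∑ x ∈ A, omegaS x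

lemma chi_complete (x : Finset α) (hx : x.Nonempty) :
    chi (x.powerset.filter (fun y => y.Nonempty)) = 1 := by
  have h0 : ∑ y ∈ x.powerset, (-1 : ℤ) ^ y.card = 0 := by
    rw [Finset.sum_powerset_neg_one_pow_card]
    simp [Finset.nonempty_iff_ne_empty.mp hx]
  have hsplit := Finset.sum_filter_add_sum_filter_not x.powerset
    (fun y => y.Nonempty) (fun y => (-1 : ℤ) ^ y.card)
  have hne : x.powerset.filter (fun y => ¬ y.Nonempty) = {∅} := by
    ext y; simp [Finset.not_nonempty_iff_eq_empty]
    rintro rfl; exact empty_subset x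
  rw [hne, Finset.sum_singleton, h0] at hsplit
  have hchi : chi (x.powerset.filter (fun y => y.Nonempty))
      = -∑ y ∈ x.powerset.filter (fun y => y.Nonempty), (-1 : ℤ) ^ y.card := by
    rw [chi, ← Finset.sum_neg_distrib]
    apply Finset.sum_congr rfl
    intro y hy
    simp only [Finset.mem_filter] at hy
    have hc : 1 ≤ y.card := Finset.card_pos.mpr hy.2
    have h2 := pow_succ (-1 : ℤ) (y.card - 1)
    rw [show y.card - 1 + 1 = y.card from by omega] at h2
    rw [omegaS]; linarith
  simp only [Finset.card_empty, pow_zero] at hsplit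
  rw [hchi]; linarith

/-- Valuation lemma: a real-valued valuation on the subcomplexes of G that is
0 on the empty complex and 1 on every complete subcomplex
{ y : ∅ ≠ y ⊆ x }, x ∈ G, must be the Euler characteristic. -/
theorem valuation_lemma (G : Finset (Finset α)) (hG : IsComplex G)
    (X : Finset (Finset α) → ℝ)
    (hX0 : X ∅ = 0)
    (hval : ∀ A B : Finset (Finset α), IsSubcomplex G A → IsSubcomplex G B →
      X (A ∪ B) + X (A ∩ B) = X A + X B)
    (hcomp : ∀ x ∈ G, X (x.powerset.filter (fun y => y.Nonempty)) = 1) :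
    ∀ A : Finset (Finset α), IsSubcomplex G A → X A = (chi A : ℝ) := by
  intro A
  induction A using Finset.strongInduction with
  | _ A ih =>
    intro hA
    rcases A.eq_empty_or_nonempty with rfl | hAne
    · simp [hX0, chi]
    · obtain ⟨x, hxA, hxmax⟩ := A.exists_max_image (fun s => s.card) hAne
      set B := A.erase x with hBdef
      set C := x.powerset.filter (fun y => y.Nonempty) with hCdef
      have hxG : x ∈ G := hA.1 hxA
      have hxne : x.Nonempty := hG.1 x hxG
      have hCA : C ⊆ A := by
        intro y hy
        simp only [hCdef, Finset.mem_filter, Finset.mem_powerset] at hy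
        exact hA.2 x hxA y hy.2 hy.1
      have hxC : x ∈ C := by
        simp [hCdef, hxne]
      have hBC : B ∪ C = A := by
        apply Finset.Subset.antisymm
        · exact Finset.union_subset (Finset.erase_subset x A) hCA
        · intro y hy
          by_cases h : y = x
          · exact Finset.mem_union_right _ (h ▸ hxC)
          · exact Finset.mem_union_left _ (Finset.mem_erase.mpr ⟨h, hy⟩)
      have hBsub : IsSubcomplex G B := by
        constructor
        · exact (Finset.erase_subset x A).trans hA.1
        · intro y hy z hz hzy
          have hyA := Finset.mem_of_mem_erase hy
          have hzA := hA.2 y hyA z hz hzy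
          refine Finset.mem_erase.mpr ⟨fun heq => ?_, hzA⟩
          have hxy : x ⊆ y := heq ▸ hzy
          have h1 : y.card ≤ x.card := hxmax y hyA
          have : x = y := Finset.eq_of_subset_of_card_le hxy h1
          exact (Finset.mem_erase.mp hy).1 this.symm
      have hCsub : IsSubcomplex G C := by
        constructor
        · intro y hy
          simp only [hCdef, Finset.mem_filter, Finset.mem_powerset] at hy
          exact hG.2 x hxG y hy.2 hy.1
        · intro y hy z hz hzy
          simp only [hCdef, Finset.mem_filter, Finset.mem_powerset] at hy ⊢
          exact ⟨hzy.trans hy.1, hz⟩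
      have hBCint : B ∩ C = C.erase x := by
        ext y
        simp only [Finset.mem_inter, Finset.mem_erase, hBdef]
        constructor
        · rintro ⟨⟨hne, _⟩, hc⟩; exact ⟨hne, hc⟩
        · rintro ⟨hne, hc⟩; exact ⟨⟨hne, hCA hc⟩, hc⟩
      have hDsub : IsSubcomplex G (C.erase x) := by
        constructor
        · exact (Finset.erase_subset x C).trans hCsub.1
        · intro y hy z hz hzy
          obtain ⟨hyx, hyC2⟩ := Finset.mem_erase.mp hy
          have hyC := hyC2
          simp only [hCdef, Finset.mem_filter, Finset.mem_powerset] at hyC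
          refine Finset.mem_erase.mpr ⟨fun heq => ?_, hCsub.2 y hyC2 z hz hzy⟩
          have hxy : x ⊆ y := heq ▸ hzy
          exact hyx (Finset.Subset.antisymm hyC.1 hxy)
      have hBss : B ⊂ A := Finset.erase_ssubset hxA
      have hDss : C.erase x ⊂ A :=
        Finset.ssubset_of_subset_of_ssubset (Finset.erase_subset_erase x hCA) hBss
      have hXB : X B = (chi B : ℝ) := ih B hBss hBsub
      have hXD : X (C.erase x) = (chi (C.erase x) : ℝ) := ih _ hDss hDsub
      have hXC : X C = 1 := hcomp x hxG
      have hv := hval B C hBsub hCsub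
      rw [hBC, hBCint, hXB, hXD, hXC] at hv
      have hchiA : chi A = chi B + omegaS x := by
        rw [chi, chi, ← Finset.add_sum_erase _ _ hxA]; ring
      have hchiC : chi C = chi (C.erase x) + omegaS x := by
        rw [chi, chi, ← Finset.add_sum_erase _ _ hxC]; ring
      have h1 : chi C = 1 := chi_complete x hxne
      rw [h1] at hchiC
      have hZ : chi (C.erase x) = 1 - omegaS x := by omega
      have hZR : (chi (C.erase x) : ℝ) = 1 - (omegaS x : ℝ) := by exact_mod_cast hZ
      rw [hchiA]
      push_cast
      linarith [hv, hZR]
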